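/- arXiv:1808.08985 — 3 statements merged into one kernel-verified Lean document; each statement's English description precedes it below -/
import Mathlib

section
/- Let X be a finite T0 topological space and Y a topological space. A multivalued map F : X → P(Y) with nonempty values is upper semicontinuous (i.e., the small preimage {x : F(x) ⊆ B} is open for every open B ⊆ Y) if and only if for all x₁ ≤ x₂ in X (the specialization order) and all y₁ ∈ F(x₁) there exists y₂ ∈ F(x₂) with y₁ ≤ y₂ (specialization order on Y). -/
/-- The specialization order: `spec x y` iff `x` belongs to every open set containing `y`. -/
def spec {X : Type*} [TopologicalSpace X] (x y : X) : Prop :=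
  ∀ U : Set X, IsOpen U → y ∈ U → x ∈ U

lemma spec_isOpen {X : Type*} [TopologicalSpace X] [Finite X] (y : X) :
    IsOpen {x | spec x y} := by
  have h : {x | spec x y} = ⋂₀ {U : Set X | IsOpen U ∧ y ∈ U} := by
    ext x
    simp only [Set.mem_setOf_eq, Set.mem_sInter, spec]
    constructor
    · intro hx U ⟨hU, hy⟩; exact hx U hU hy
    · intro hx U hU hy; exact hx U ⟨hU, hy⟩
  rw [h]
  exact Set.Finite.isOpen_sInter (Set.toFinite _) (fun U hU => hU.1)

/-- A multivalued map `F : X ⊸ Y` with nonempty values, where `X` is a finite `T0` space, is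
upper semicontinuous iff for all `x₁ ≤ x₂` and `y₁ ∈ F x₁` there is `y₂ ∈ F x₂` with
`y₁ ≤ y₂` in the specialization orders. -/
theorem stmt0 {X Y : Type*} [TopologicalSpace X] [Finite X] [T0Space X]
    [TopologicalSpace Y] (F : X → Set Y) (hne : ∀ x, (F x).Nonempty) :
    (∀ B : Set Y, IsOpen B → IsOpen {x | F x ⊆ B}) ↔
      ∀ x₁ x₂ : X, spec x₁ x₂ → ∀ y₁ ∈ F x₁, ∃ y₂ ∈ F x₂, spec y₁ y₂ := by
  constructor
  · intro h x₁ x₂ hx y₁ hy₁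
    by_contra hcon
    push_neg at hcon
    have hcon' : ∀ y₂ ∈ F x₂, ∃ U : Set Y, IsOpen U ∧ y₂ ∈ U ∧ y₁ ∉ U := by
      intro y₂ hy₂
      have := hcon y₂ hy₂
      simp only [spec, not_forall] at this
      obtain ⟨U, hU, hy, hn⟩ := this
      exact ⟨U, hU, hy, hn⟩
    choose U hUopen hUmem hUnot using hcon'
    set B : Set Y := ⋃ (y : Y) (hy : y ∈ F x₂), U y hy with hB
    have hBopen : IsOpen B := isOpen_iUnion fun y => isOpen_iUnion fun hy => hUopen y hy
    have hx₂B : x₂ ∈ {x | F x ⊆ B} := fun y hy =>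
      Set.mem_iUnion.2 ⟨y, Set.mem_iUnion.2 ⟨hy, hUmem y hy⟩⟩
    have hx₁B : x₁ ∈ {x | F x ⊆ B} := hx _ (h B hBopen) hx₂B
    have : y₁ ∈ B := hx₁B hy₁
    obtain ⟨y, hy⟩ := Set.mem_iUnion.1 this
    obtain ⟨hymem, hyU⟩ := Set.mem_iUnion.1 hy
    exact hUnot y hymem hyU
  · intro h B hB
    have hsub : {x | F x ⊆ B} = ⋃ x₂ ∈ {x | F x ⊆ B}, {x₁ | spec x₁ x₂} := by
      apply Set.Subset.antisymm
      · intro x hx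
        exact Set.mem_biUnion hx (fun U _ hU => hU)
      · intro x hx
        simp only [Set.mem_iUnion] at hx
        obtain ⟨x₂, hx₂, hspec⟩ := hx
        intro y₁ hy₁
        obtain ⟨y₂, hy₂, hs⟩ := h x x₂ hspec y₁ hy₁
        exact hs B hB (hx₂ hy₂)
    rw [hsub]
    exact isOpen_biUnion fun x₂ _ => spec_isOpen x₂
end

section
/- Let X be a finite T0 space. Two points x, y ∈ X lie in the same path-component if and only if there exists a fence from x to y, i.e., a finite sequence x = x₀ ≤ x₁ ≥ x₂ ≤ ... xₙ = y of points of X with successive comparabilities alternating in the specialization order. -/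
lemma spec_iff {X : Type*} [TopologicalSpace X] {x y : X} : spec x y ↔ x ⤳ y :=
  specializes_iff_forall_open.symm

lemma spec_refl {X : Type*} [TopologicalSpace X] (x : X) : spec x x := fun _ _ h => h

/-- The fence relation. -/
def fenceRel {X : Type*} [TopologicalSpace X] : X → X → Prop :=
  Relation.ReflTransGen (fun a b => spec a b ∨ spec b a)

lemma fenceRel_of_spec {X : Type*} [TopologicalSpace X] {x y : X} (h : spec x y) :
    fenceRel x y := Relation.ReflTransGen.single (Or.inl h)

lemma fenceRel_class_isOpen {X : Type*} [TopologicalSpace X] [Finite X]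
    (S : Set X) (hS : ∀ z w, z ∈ S → spec w z → w ∈ S) : IsOpen S := by
  rw [isOpen_iff_forall_mem_open]
  intro z hz
  refine ⟨⋂₀ {U : Set X | IsOpen U ∧ z ∈ U}, ?_, ?_, ?_⟩
  · intro w hw
    exact hS z w hz (fun U hU hzU => hw U ⟨hU, hzU⟩)
  · exact Set.Finite.isOpen_sInter (Set.toFinite _) (fun U hU => hU.1)
  · intro U hU; exact hU.2

/-- Fence-related points give a fence in the required indexed form (of even length). -/
lemma fenceRel_to_fence {X : Type*} [TopologicalSpace X] {x y : X} (h : fenceRel x y) :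
    ∃ (n : ℕ) (c : ℕ → X), Even n ∧ c 0 = x ∧ c n = y ∧
      ∀ i < n, (Even i → spec (c i) (c (i + 1))) ∧ (Odd i → spec (c (i + 1)) (c i)) := by
  induction h with
  | refl => exact ⟨0, fun _ => x, Even.zero, rfl, rfl, fun i hi => absurd hi (Nat.not_lt_zero i)⟩
  | tail _ hst ih =>
    obtain ⟨n, c, hn, hc0, hcn, hc⟩ := ih
    rename_i z w _
    rcases hst with hzw | hwz
    · -- z ≤ w : append z, w, w
      refine ⟨n + 2, fun i => if i ≤ n then c i else w, hn.add even_two, by simp [hc0], by simp, ?_⟩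
      intro i hi
      rcases lt_trichotomy i n with h1 | h1 | h1
      · have : i ≤ n := by omega
        have : i + 1 ≤ n := by omega
        simpa [*] using hc i h1
      · subst h1
        constructor
        · intro _; simpa [hcn] using hzw
        · intro hodd; exact (Nat.not_odd_iff_even.mpr hn hodd).elim
      · have hin : ¬ i ≤ n := by omega
        have hin1 : ¬ i + 1 ≤ n := by omega
        simp only [hin, hin1, if_false]
        exact ⟨fun _ => spec_refl w, fun _ => spec_refl w⟩
    · -- w ≤ z : append z, z, w
      refine ⟨n + 2, fun i => if i ≤ n then c i else if i ≤ n + 1 then z else w,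
        hn.add even_two, by simp [hc0], by simp [show ¬ n + 2 ≤ n by omega, show ¬ n + 2 ≤ n + 1 by omega], ?_⟩
      intro i hi
      rcases lt_trichotomy i n with h1 | h1 | h1
      · have : i ≤ n := by omega
        have : i + 1 ≤ n := by omega
        simpa [*] using hc i h1
      · subst h1
        simp only [le_refl, if_true, show ¬ i + 1 ≤ i by omega, show i + 1 ≤ i + 1 by omega,
          if_true, if_false]
        exact ⟨fun _ => hcn ▸ spec_refl z, fun hodd => (Nat.not_odd_iff_even.mpr hn hodd).elim⟩
      · have h2 : i = n + 1 := by omega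
        subst h2
        simp only [show ¬ n + 1 ≤ n by omega, show n + 1 ≤ n + 1 by omega,
          show ¬ n + 1 + 1 ≤ n by omega, show ¬ n + 1 + 1 ≤ n + 1 by omega, if_false, if_true]
        refine ⟨fun he => ?_, fun _ => hwz⟩
        exact absurd hn (by simp [Nat.even_iff] at he ⊢; omega)

/-- Two points of a finite `T0` space lie in the same path-component iff there is a fence
`x = x₀ ≤ x₁ ≥ x₂ ≤ … xₙ = y` in the specialization order. -/
theorem stmt14 {X : Type*} [TopologicalSpace X] [Finite X] [T0Space X] (x y : X) :
    Joined x y ↔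
      ∃ (n : ℕ) (c : ℕ → X), c 0 = x ∧ c n = y ∧
        ∀ i < n, (Even i → spec (c i) (c (i + 1))) ∧ (Odd i → spec (c (i + 1)) (c i)) := by
  constructor
  · intro hxy
    -- the fence class of x is clopen
    set S : Set X := {z | fenceRel x z} with hSdef
    have hext : ∀ z w, fenceRel x z → (spec z w ∨ spec w z) → fenceRel x w := by
      intro z w hz h
      exact hz.tail h
    have hopen : IsOpen S :=
      fenceRel_class_isOpen S (fun z w hz hw => hext z w hz (Or.inr hw))
    have hclosed : IsClosed S := by
      rw [← isOpen_compl_iff]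
      apply fenceRel_class_isOpen
      intro z w hz hw hwS
      exact hz (hext w z hwS (Or.inl hw))
    have hxS : x ∈ S := Relation.ReflTransGen.refl
    have hyS : y ∈ S := by
      have : y ∈ connectedComponent x :=
        pathComponent_subset_component x hxy
      have hcl : IsClopen S := ⟨hclosed, hopen⟩
      exact hcl.connectedComponent_subset hxS this
    obtain ⟨n, c, _, hc0, hcn, hc⟩ := fenceRel_to_fence hyS
    exact ⟨n, c, hc0, hcn, hc⟩
  · rintro ⟨n, c, hc0, hcn, hc⟩
    subst hc0 hcn
    have key : ∀ m, m ≤ n → Joined (c 0) (c m) := by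
      intro m hm
      induction m with
      | zero => exact Joined.refl _
      | succ k ih =>
        have hk := hc k (by omega)
        have step : Joined (c k) (c (k + 1)) := by
          rcases Nat.even_or_odd k with he | ho
          · exact ((spec_iff.mp (hk.1 he)).joinedIn (Set.mem_univ _)
              (Set.mem_univ _)).joined
          · exact (((spec_iff.mp (hk.2 ho)).joinedIn (Set.mem_univ _)
              (Set.mem_univ _)).joined).symm
        exact (ih (by omega)).trans step
    exact key n le_rfl
end

section
/- Let X be a finite T0 space, Y a topological space, and F : X → P(Y) a strongly upper semicontinuous multivalued map with nonempty values. View F as the subspace {(x,y) ∈ X × Y : y ∈ F(x)} of X × Y, and let p₁ : F → X be the first-coordinate projection. Then for each x ∈ X, the fiber preimage p₁⁻¹(U_x) is homotopy equivalent to the subspace F(x) ⊆ Y, where U_x is the smallest open set containing x. -/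
/-!
`p₁⁻¹(U_x)` deformation retracts onto `{x} × F x`: at time `1` every point `(z, y)` is moved to
`(x, y)`. This stays in the graph because strong upper semicontinuity makes `F` monotone for
the specialization order, and it is continuous because every open set containing `x` contains
every `z ≤ x`.
-/

open ContinuousMap unitInterval

theorem spec_eq_specializes {X : Type*} [TopologicalSpace X] :
    (spec : X → X → Prop) = (· ⤳ ·) := by
  ext a b
  exact specializes_iff_forall_open.symm

theorem subset_of_specializes_of_isOpen_setOf_subset {X Y : Type*} [TopologicalSpace X]
    {F : X → Set Y} (hF : ∀ B : Set Y, IsOpen {x | F x ⊆ B}) {z x : X} (h : z ⤳ x) :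
    F z ⊆ F x :=
  h.mem_open (hF (F x)) Set.Subset.rfl

noncomputable section

variable {X Y : Type*} [TopologicalSpace X] [TopologicalSpace Y]

theorem continuous_ite_eq_one_specializes (x : X) :
    Continuous fun q : I × {z : X // z ⤳ x} => if q.1 = 1 then x else (q.2 : X) := by
  rw [continuous_def]
  intro W hW
  by_cases hx : x ∈ W
  · convert isOpen_univ
    ext ⟨t, z⟩
    simp only [Set.mem_preimage, Set.mem_univ, iff_true]
    split_ifs
    exacts [hx, z.2.mem_open hW hx]
  · convert (isOpen_compl_singleton (x := (1 : I))).prod (hW.preimage continuous_subtype_val)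
      using 1
    ext ⟨t, z⟩
    by_cases ht : t = 1 <;> simp [ht, hx]

variable (G : X → Set Y) (x : X)

def graphRetraction (hG : ∀ z, z ⤳ x → G z ⊆ G x) :
    C({p : X × Y // p.1 ⤳ x ∧ p.2 ∈ G p.1}, G x) :=
  ⟨fun p => ⟨p.1.2, hG _ p.2.1 p.2.2⟩, by fun_prop⟩

def graphInclusion : C(G x, {p : X × Y // p.1 ⤳ x ∧ p.2 ∈ G p.1}) :=
  ⟨fun y => ⟨(x, y), specializes_rfl, y.2⟩, by fun_prop⟩

def graphDeformation (hG : ∀ z, z ⤳ x → G z ⊆ G x) :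
    Homotopy (ContinuousMap.id _) ((graphInclusion G x).comp (graphRetraction G x hG)) where
  toFun q := ⟨(if q.1 = 1 then x else q.2.1.1, q.2.1.2), by
    split_ifs
    exacts [⟨specializes_rfl, hG _ q.2.2.1 q.2.2.2⟩, q.2.2]⟩
  continuous_toFun := by
    refine Continuous.subtype_mk (Continuous.prodMk ?_ (by fun_prop)) _
    exact (continuous_ite_eq_one_specializes x).comp
      (f := fun q : I × {p : X × Y // p.1 ⤳ x ∧ p.2 ∈ G p.1} => (q.1, ⟨q.2.1.1, q.2.2.1⟩))
      (by fun_prop)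
  map_zero_left p := by simp
  map_one_left p := by simp [graphInclusion, graphRetraction]

def homotopyEquivGraphSpecializes (hG : ∀ z, z ⤳ x → G z ⊆ G x) :
    G x ≃ₕ {p : X × Y // p.1 ⤳ x ∧ p.2 ∈ G p.1} where
  toFun := graphInclusion G x
  invFun := graphRetraction G x hG
  left_inv := .refl _
  right_inv := ⟨(graphDeformation G x hG).symm⟩

end

theorem stmt16_general {X Y : Type*} [TopologicalSpace X]
    [TopologicalSpace Y] (F : X → Set Y)
    (hsusc : ∀ B : Set Y, IsOpen {x | F x ⊆ B}) (x : X) :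
    Nonempty
      (ContinuousMap.HomotopyEquiv (F x) {p : X × Y // spec p.1 x ∧ p.2 ∈ F p.1}) := by
  rw [spec_eq_specializes]
  exact ⟨homotopyEquivGraphSpecializes F x
    fun _ => subset_of_specializes_of_isOpen_setOf_subset hsusc⟩

/-- For a strongly upper semicontinuous multivalued map `F : X ⊸ Y` with nonempty values,
`X` finite `T0`, the preimage `p₁⁻¹(U_x)` of the minimal open neighborhood of `x` under
the first projection from the graph of `F` is homotopy equivalent to `F x`. Here
`p₁⁻¹(U_x) = {(z, y) : z ≤ x, y ∈ F z}` with the subspace topology of `X × Y`. -/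
theorem stmt16 {X Y : Type*} [TopologicalSpace X] [Finite X] [T0Space X]
    [TopologicalSpace Y] (F : X → Set Y)
    (hsusc : ∀ B : Set Y, IsOpen {x | F x ⊆ B})
    (hne : ∀ x, (F x).Nonempty) (x : X) :
    Nonempty
      (ContinuousMap.HomotopyEquiv (F x) {p : X × Y // spec p.1 x ∧ p.2 ∈ F p.1}) :=
  stmt16_general F hsusc x
end
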